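/- Let v₁ be a nonzero real number and define x(t) = exp(v₁·t), y(t) = t·exp(v₁·t), z(t) = exp(-2v₁·t) for t ∈ ℝ. Then each of x, y, z satisfies the ODE u'''(t) - 3v₁²·u'(t) + 2v₁³·u(t) = 0 for all t ∈ ℝ, the Wronskian is constant with W(x,y,z)(t) = 9v₁² for all t ∈ ℝ, and the triple (x, y, z) satisfies the Tzitzeica curve equation W(x',y',z')(t) = (-2v₁/9) · (W(x,y,z)(t))² for all t ∈ ℝ. -/

import Mathlib

/-- The Wronskian of three functions `x, y, z : ℝ → ℝ`. -/
noncomputable def W3 (x y z : ℝ → ℝ) (t : ℝ) : ℝ :=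
  Matrix.det !![x t, y t, z t;
    deriv x t, deriv y t, deriv z t;
    deriv (deriv x) t, deriv (deriv y) t, deriv (deriv z) t]

noncomputable def x₁₀ (v₁ : ℝ) : ℝ → ℝ := fun t => Real.exp (v₁ * t)
noncomputable def y₁₀ (v₁ : ℝ) : ℝ → ℝ := fun t => t * Real.exp (v₁ * t)
noncomputable def z₁₀ (v₁ : ℝ) : ℝ → ℝ := fun t => Real.exp (-2 * v₁ * t)

/-! All three functions have the form `(b + c t) e^{λ t}`, a family closed under
differentiation, so every quantity in the statement is an explicit exponential polynomial.
The exponents `v₁, v₁, -2v₁` sum to zero, which makes both Wronskians constant. -/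

open Real

noncomputable def affineExp (b c l : ℝ) : ℝ → ℝ := fun t => (b + c * t) * exp (l * t)

lemma hasDerivAt_affineExp (b c l t : ℝ) :
    HasDerivAt (affineExp b c l) (affineExp (c + l * b) (l * c) l t) t := by
  have hexp : HasDerivAt (fun s => exp (l * s)) (exp (l * t) * l) t := by
    simpa using ((hasDerivAt_id t).const_mul l).exp
  exact ((hasDerivAt_id t).const_mul c |>.const_add b).mul hexp |>.congr_deriv
    (by simp only [affineExp, id_eq]; ring)

lemma deriv_affineExp (b c l : ℝ) :
    deriv (affineExp b c l) = affineExp (c + l * b) (l * c) l :=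
  funext fun t => (hasDerivAt_affineExp b c l t).deriv

lemma x₁₀_eq_affineExp (a : ℝ) : x₁₀ a = affineExp 1 0 a := by
  funext t; simp [x₁₀, affineExp]

lemma y₁₀_eq_affineExp (a : ℝ) : y₁₀ a = affineExp 0 1 a := by
  funext t; simp [y₁₀, affineExp]

lemma z₁₀_eq_affineExp (a : ℝ) : z₁₀ a = affineExp 1 0 (-2 * a) := by
  funext t; simp [z₁₀, affineExp]

/-- The characteristic polynomial is `p(λ) = λ³ - 3a²λ + 2a³ = (λ - a)²(λ + 2a)`, and the
operator acts on `(b + c t) e^{λ t}` as `(p(λ)(b + c t) + p'(λ) c) e^{λ t}`. -/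
lemma ode_affineExp (a b c l t : ℝ) :
    deriv (deriv (deriv (affineExp b c l))) t - 3 * a ^ 2 * deriv (affineExp b c l) t
      + 2 * a ^ 3 * affineExp b c l t
      = ((l ^ 3 - 3 * a ^ 2 * l + 2 * a ^ 3) * (b + c * t) + (3 * l ^ 2 - 3 * a ^ 2) * c)
        * exp (l * t) := by
  simp only [deriv_affineExp, affineExp]
  ring

lemma exp_mul_exp_mul_exp_neg_two_mul (a t : ℝ) :
    exp (a * t) * exp (a * t) * exp (-2 * a * t) = 1 := by
  rw [← exp_add, ← exp_add, ← exp_zero]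
  ring_nf

lemma W3_x₁₀_y₁₀_z₁₀ (a t : ℝ) : W3 (x₁₀ a) (y₁₀ a) (z₁₀ a) t = 9 * a ^ 2 := by
  simp only [W3, x₁₀_eq_affineExp, y₁₀_eq_affineExp, z₁₀_eq_affineExp, deriv_affineExp,
    affineExp, Matrix.det_fin_three, Matrix.of_apply, Matrix.cons_val_zero, Matrix.cons_val_one,
    Matrix.cons_val_two, Matrix.head_cons, Matrix.tail_cons]
  linear_combination 9 * a ^ 2 * exp_mul_exp_mul_exp_neg_two_mul a t

lemma W3_deriv_x₁₀_y₁₀_z₁₀ (a t : ℝ) :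
    W3 (deriv (x₁₀ a)) (deriv (y₁₀ a)) (deriv (z₁₀ a)) t = -18 * a ^ 5 := by
  simp only [W3, x₁₀_eq_affineExp, y₁₀_eq_affineExp, z₁₀_eq_affineExp, deriv_affineExp,
    affineExp, Matrix.det_fin_three, Matrix.of_apply, Matrix.cons_val_zero, Matrix.cons_val_one,
    Matrix.cons_val_two, Matrix.head_cons, Matrix.tail_cons]
  linear_combination -18 * a ^ 5 * exp_mul_exp_mul_exp_neg_two_mul a t

theorem stmt_10_general (v₁ : ℝ) :
    (∀ t : ℝ, deriv (deriv (deriv (x₁₀ v₁))) t - 3 * v₁ ^ 2 * deriv (x₁₀ v₁) t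
      + 2 * v₁ ^ 3 * x₁₀ v₁ t = 0) ∧
    (∀ t : ℝ, deriv (deriv (deriv (y₁₀ v₁))) t - 3 * v₁ ^ 2 * deriv (y₁₀ v₁) t
      + 2 * v₁ ^ 3 * y₁₀ v₁ t = 0) ∧
    (∀ t : ℝ, deriv (deriv (deriv (z₁₀ v₁))) t - 3 * v₁ ^ 2 * deriv (z₁₀ v₁) t
      + 2 * v₁ ^ 3 * z₁₀ v₁ t = 0) ∧
    (∀ t : ℝ, W3 (x₁₀ v₁) (y₁₀ v₁) (z₁₀ v₁) t = 9 * v₁ ^ 2) ∧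
    (∀ t : ℝ, W3 (deriv (x₁₀ v₁)) (deriv (y₁₀ v₁)) (deriv (z₁₀ v₁)) t
      = (-2 * v₁ / 9) * (W3 (x₁₀ v₁) (y₁₀ v₁) (z₁₀ v₁) t) ^ 2) := by
  refine ⟨fun t => ?_, fun t => ?_, fun t => ?_, W3_x₁₀_y₁₀_z₁₀ v₁, fun t => ?_⟩
  · rw [x₁₀_eq_affineExp, ode_affineExp]; ring
  · rw [y₁₀_eq_affineExp, ode_affineExp]; ring
  · rw [z₁₀_eq_affineExp, ode_affineExp]; ring
  · rw [W3_deriv_x₁₀_y₁₀_z₁₀, W3_x₁₀_y₁₀_z₁₀]; ring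

theorem stmt_10 (v₁ : ℝ) (hv₁ : v₁ ≠ 0) :
    (∀ t : ℝ, deriv (deriv (deriv (x₁₀ v₁))) t - 3 * v₁ ^ 2 * deriv (x₁₀ v₁) t
      + 2 * v₁ ^ 3 * x₁₀ v₁ t = 0) ∧
    (∀ t : ℝ, deriv (deriv (deriv (y₁₀ v₁))) t - 3 * v₁ ^ 2 * deriv (y₁₀ v₁) t
      + 2 * v₁ ^ 3 * y₁₀ v₁ t = 0) ∧
    (∀ t : ℝ, deriv (deriv (deriv (z₁₀ v₁))) t - 3 * v₁ ^ 2 * deriv (z₁₀ v₁) t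
      + 2 * v₁ ^ 3 * z₁₀ v₁ t = 0) ∧
    (∀ t : ℝ, W3 (x₁₀ v₁) (y₁₀ v₁) (z₁₀ v₁) t = 9 * v₁ ^ 2) ∧
    (∀ t : ℝ, W3 (deriv (x₁₀ v₁)) (deriv (y₁₀ v₁)) (deriv (z₁₀ v₁)) t
      = (-2 * v₁ / 9) * (W3 (x₁₀ v₁) (y₁₀ v₁) (z₁₀ v₁) t) ^ 2) :=
  stmt_10_general v₁
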